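/- arXiv:math/9908009 — 4 statements merged into one kernel-verified Lean document; each statement's English description precedes it below -/
import Mathlib

section
/- For each t in the open interval (5,6), every complex number z = x + iy with t - 4 + y²/16 ≤ x ≤ 4 - y²/16 can be written uniquely as -(ζ - 2i)² for some ζ = ξ + iη with 0 ≤ η < 1. -/
open Complex

/-- For each `t ∈ (5,6)`, every `z = x + iy` with `t - 4 + y²/16 ≤ x ≤ 4 - y²/16`
can be written uniquely as `-(ζ - 2i)²` with `ζ = ξ + iη`, `0 ≤ η < 1`. -/
theorem stmt0 (t : ℝ) (ht : t ∈ Set.Ioo (5 : ℝ) 6) (z : ℂ)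
    (h1 : t - 4 + z.im ^ 2 / 16 ≤ z.re) (h2 : z.re ≤ 4 - z.im ^ 2 / 16) :
    ∃! ζ : ℂ, (0 ≤ ζ.im ∧ ζ.im < 1) ∧ z = -(ζ - 2 * I) ^ 2 := by
  obtain ⟨ht5, ht6⟩ := ht
  obtain ⟨x, y, rfl⟩ : ∃ x y : ℝ, z = (x : ℂ) + y * I := ⟨z.re, z.im, (z.re_add_im).symm⟩
  simp only [Complex.add_re, Complex.add_im, Complex.ofReal_re, Complex.ofReal_im,
    Complex.mul_re, Complex.mul_im, Complex.I_re, Complex.I_im, mul_zero, mul_one,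
    zero_mul, sub_zero, zero_add, zero_sub, add_zero] at h1 h2
  have hx1 : 1 < x := by nlinarith [sq_nonneg y]
  set r := Real.sqrt (x ^ 2 + y ^ 2) with hrdef
  have hrnn : 0 ≤ r := Real.sqrt_nonneg _
  have hr2 : r ^ 2 = x ^ 2 + y ^ 2 := Real.sq_sqrt (by positivity)
  have hrx : x ≤ r := by nlinarith [sq_nonneg y]
  have hxr8 : x + r ≤ 8 := by nlinarith
  have hxr2 : 2 < x + r := by linarith
  set s := Real.sqrt ((x + r) / 2) with hsdef
  have hs2 : s ^ 2 = (x + r) / 2 := Real.sq_sqrt (by linarith)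
  have hsnn : 0 ≤ s := Real.sqrt_nonneg _
  have hs1 : 1 < s := by nlinarith
  have hsle2 : s ≤ 2 := by nlinarith
  have hs0 : 0 < s := by linarith
  set a := y / (2 * s) with hadef
  have hsne : s ≠ 0 := ne_of_gt hs0
  have ha2 : a ^ 2 = (r - x) / 2 := by
    have hy2 : y ^ 2 = (r - x) * (r + x) := by nlinarith
    rw [hadef, div_pow, mul_pow, hs2, hy2]
    have hne : x + r ≠ 0 := by linarith
    field_simp
    ring
  have hre : x = s ^ 2 - a ^ 2 := by rw [hs2, ha2]; ring
  have him : y = 2 * a * s := by rw [hadef]; field_simp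
  set ζ₀ : ℂ := (a : ℂ) + (2 - s : ℝ) * I with hζ₀
  have hζ₀im : ζ₀.im = 2 - s := by simp [hζ₀]
  have key : (x : ℂ) + y * I = -(ζ₀ - 2 * I) ^ 2 := by
    rw [hζ₀, hre, him]
    push_cast
    linear_combination ((s : ℂ) ^ 2) * Complex.I_sq
  refine ⟨ζ₀, ⟨⟨by rw [hζ₀im]; linarith, by rw [hζ₀im]; linarith⟩, key⟩, ?_⟩
  rintro ζ ⟨⟨him0, him1⟩, hz⟩
  have hfac : (ζ - ζ₀) * (ζ + ζ₀ - 4 * I) = 0 := by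
    linear_combination hz - key
  rcases mul_eq_zero.mp hfac with h | h
  · exact sub_eq_zero.mp h
  · exfalso
    have h' := congrArg Complex.im h
    simp [Complex.add_im, Complex.sub_im, Complex.mul_im, hζ₀im] at h'
    linarith
end

section
/- For each t in the open interval (5,6), every complex number z = x + iy with t - 4 + y²/16 ≤ x ≤ 4 - y²/16 can be written uniquely as (ζ + i)² + t for some ζ = ξ + iη with 0 < η ≤ 1. -/
open Complex

set_option maxHeartbeats 1000000

/-- For each `t ∈ (5,6)`, every `z = x + iy` with `t - 4 + y²/16 ≤ x ≤ 4 - y²/16`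
can be written uniquely as `(ζ + i)² + t` with `ζ = ξ + iη`, `0 < η ≤ 1`. -/
theorem stmt1 (t : ℝ) (ht : t ∈ Set.Ioo (5 : ℝ) 6) (z : ℂ)
    (h1 : t - 4 + z.im ^ 2 / 16 ≤ z.re) (h2 : z.re ≤ 4 - z.im ^ 2 / 16) :
    ∃! ζ : ℂ, (0 < ζ.im ∧ ζ.im ≤ 1) ∧ z = (ζ + I) ^ 2 + (t : ℂ) := by
  obtain ⟨ht5, ht6⟩ := ht
  set u : ℝ := z.re - t with hu
  set v : ℝ := z.im with hv
  have hv2 : 0 ≤ v ^ 2 := sq_nonneg v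
  have hu_neg : u < -1 := by
    have h2' : z.re ≤ 4 - v ^ 2 / 16 := h2
    simp only [hu]; nlinarith
  have hu_ge : v ^ 2 / 16 - 4 ≤ u := by
    have h1' : t - 4 + v ^ 2 / 16 ≤ z.re := h1
    simp only [hu]; linarith
  set m : ℝ := Real.sqrt (u ^ 2 + v ^ 2) with hm
  have hm_nonneg : 0 ≤ m := Real.sqrt_nonneg _
  have hm_sq : m ^ 2 = u ^ 2 + v ^ 2 := Real.sq_sqrt (by positivity)
  have hm_ge : -u ≤ m := by nlinarith
  set b : ℝ := Real.sqrt ((m - u) / 2) with hb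
  have hb_sq : b ^ 2 = (m - u) / 2 := Real.sq_sqrt (by linarith)
  have hb1 : 1 < b ^ 2 := by rw [hb_sq]; linarith
  have hb4 : b ^ 2 ≤ 4 := by
    have hmle : m ≤ u + 8 := by nlinarith
    rw [hb_sq]; linarith
  have hb_nonneg : 0 ≤ b := Real.sqrt_nonneg _
  have hb_gt1 : 1 < b := by nlinarith
  have hb_le2 : b ≤ 2 := by nlinarith
  have hb_ne : b ≠ 0 := by positivity
  have hmb : m = 2 * b ^ 2 + u := by rw [hb_sq]; ring
  have hkey : v ^ 2 = 4 * b ^ 4 + 4 * u * b ^ 2 := by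
    have h := hm_sq; rw [hmb] at h; linear_combination -h
  set a : ℝ := v / (2 * b) with ha_def
  have ha : a ^ 2 - b ^ 2 = z.re - t := by
    rw [ha_def, ← hu]; field_simp; linear_combination hkey
  have hc : 2 * a * b = z.im := by
    rw [ha_def, ← hv]; field_simp
  set ζ : ℂ := (⟨a, b - 1⟩ : ℂ) with hζ
  have hζim : ζ.im = b - 1 := rfl
  have heq : z = (ζ + I) ^ 2 + (t : ℂ) := by
    rw [hζ]
    apply Complex.ext <;>
      simp only [Complex.add_re, Complex.add_im, pow_two, Complex.mul_re, Complex.mul_im,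
        Complex.I_re, Complex.I_im, Complex.ofReal_re, Complex.ofReal_im] <;>
      nlinarith [ha, hc]
  refine ⟨ζ, ⟨⟨by rw [hζim]; linarith, by rw [hζim]; linarith⟩, heq⟩, ?_⟩
  rintro w ⟨⟨hw1, hw2⟩, hw3⟩
  have hfac : (w - ζ) * (w + ζ + 2 * I) = 0 := by linear_combination heq - hw3
  rcases mul_eq_zero.mp hfac with h | h
  · exact sub_eq_zero.mp h
  · exfalso
    have him := congrArg Complex.im h
    simp only [Complex.add_im, Complex.mul_im, Complex.I_im, Complex.I_re, Complex.mul_re,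
      Complex.zero_im, Complex.re_ofNat, Complex.im_ofNat, hζim] at him
    linarith
end

section
/- Let β, ε, K > 0 with ε < β/2 and K > (2β+1)A and K²/ε² ≥ 2(A+A²)/β for some A > 0. Suppose ξ ∈ ℝ² and q₁, q₂, m ∈ ℝ with |q₁| ≤ A|ξ|², |q₂| ≤ A|ξ|⁴, |m| ≤ A|ξ|². If η₁, η₂ ∈ ℝ satisfy 0 < η₁ < ε and |η₂| < εη₁² - K|ξ|²η₁, then η₁ - q₁ > 0 and |η₂ - q₂ - m(η₁ - q₁)| < β(η₁ - q₁)². -/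
set_option maxHeartbeats 1000000 in
/-- Points of `S_{ε,K}` lie in the translated spike `Sp(β,ℓ,q₁,q₂,m)`
apart from the length condition. -/
theorem stmt7 (β ε K A : ℝ) (hβ : 0 < β) (hε : 0 < ε) (hK : 0 < K) (hA : 0 < A)
    (hεβ : ε < β / 2) (hKA : K > (2 * β + 1) * A)
    (hKε : K ^ 2 / ε ^ 2 ≥ 2 * (A + A ^ 2) / β)
    (ξ : EuclideanSpace ℝ (Fin 2)) (q₁ q₂ m : ℝ)
    (hq₁ : |q₁| ≤ A * ‖ξ‖ ^ 2) (hq₂ : |q₂| ≤ A * ‖ξ‖ ^ 4) (hm : |m| ≤ A * ‖ξ‖ ^ 2)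
    (η₁ η₂ : ℝ) (h1 : 0 < η₁) (h2 : η₁ < ε)
    (h3 : |η₂| < ε * η₁ ^ 2 - K * ‖ξ‖ ^ 2 * η₁) :
    η₁ - q₁ > 0 ∧ |η₂ - q₂ - m * (η₁ - q₁)| < β * (η₁ - q₁) ^ 2 := by
  have hs4 : ‖ξ‖ ^ 4 = (‖ξ‖ ^ 2) ^ 2 := by ring
  rw [hs4] at hq₂
  obtain ⟨s, hgen⟩ : ∃ s : ℝ, ‖ξ‖ ^ 2 = s := ⟨_, rfl⟩
  have hs0 : 0 ≤ s := hgen ▸ (by positivity)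
  rw [hgen] at hq₁ hq₂ hm h3
  clear hgen hs4
  obtain ⟨hq₁a, hq₁b⟩ := abs_le.mp hq₁
  obtain ⟨hq₂a, hq₂b⟩ := abs_le.mp hq₂
  obtain ⟨hma, hmb⟩ := abs_le.mp hm
  obtain ⟨h3a, h3b⟩ := abs_lt.mp h3
  -- K*s < ε*η₁
  have h30 : 0 < ε * η₁ ^ 2 - K * s * η₁ := lt_of_le_of_lt (abs_nonneg η₂) h3
  have hsK : K * s < ε * η₁ := by nlinarith
  have hAεK : A * ε < K := by nlinarith [mul_pos hA hβ]
  have hAs : A * s < η₁ := by nlinarith [mul_nonneg hA.le hs0]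
  have ht : η₁ - q₁ > 0 := by linarith
  refine ⟨ht, ?_⟩
  have hE : 2 * (A + A ^ 2) * ε ^ 2 ≤ β * K ^ 2 := by
    rw [ge_iff_le, div_le_div_iff₀ hβ (by positivity)] at hKε
    linarith
  have hs2 : K ^ 2 * s ^ 2 ≤ ε ^ 2 * η₁ ^ 2 := by
    have h := mul_le_mul hsK.le hsK.le (mul_nonneg hK.le hs0) (mul_pos hε h1).le
    nlinarith [h]
  have key : (A + A ^ 2) * s ^ 2 ≤ β / 2 * η₁ ^ 2 := by
    have ha : 2 * (A + A ^ 2) * ε ^ 2 * s ^ 2 ≤ β * K ^ 2 * s ^ 2 :=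
      mul_le_mul_of_nonneg_right hE (sq_nonneg s)
    have hb : β * (K ^ 2 * s ^ 2) ≤ β * (ε ^ 2 * η₁ ^ 2) :=
      mul_le_mul_of_nonneg_left hs2 hβ.le
    have hε2 : (0:ℝ) < ε ^ 2 := by positivity
    rw [← mul_le_mul_iff_left₀ hε2]
    linarith [ha, hb]
  -- lower bound for the square
  have hsqle : β * (η₁ - A * s) ^ 2 ≤ β * (η₁ - q₁) ^ 2 := by
    apply mul_le_mul_of_nonneg_left _ hβ.le
    apply pow_le_pow_left₀ (by linarith) (by linarith)
  have habs : |η₂ - q₂ - m * (η₁ - q₁)| ≤ |η₂| + |q₂| + |m| * (η₁ - q₁) := by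
    calc |η₂ - q₂ - m * (η₁ - q₁)| ≤ |η₂ - q₂| + |m * (η₁ - q₁)| := abs_sub _ _
    _ ≤ |η₂| + |q₂| + |m| * |η₁ - q₁| := by
        rw [abs_mul]; linarith [abs_sub η₂ q₂]
    _ = |η₂| + |q₂| + |m| * (η₁ - q₁) := by rw [abs_of_pos ht]
  have hmabs : |m| * (η₁ - q₁) ≤ A * s * (η₁ + A * s) := by
    have h0 : 0 ≤ |m| := abs_nonneg m
    have : η₁ - q₁ ≤ η₁ + A * s := by linarith
    calc |m| * (η₁ - q₁) ≤ A * s * (η₁ - q₁) :=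
          mul_le_mul_of_nonneg_right hm ht.le
      _ ≤ A * s * (η₁ + A * s) :=
          mul_le_mul_of_nonneg_left this (mul_nonneg hA.le hs0)
  have hfinal : |η₂| + |q₂| + |m| * (η₁ - q₁) < β * (η₁ - A * s) ^ 2 := by
    have hc : ε * η₁ ^ 2 < β / 2 * η₁ ^ 2 :=
      mul_lt_mul_of_pos_right hεβ (by positivity)
    have hd : (2 * β + 1) * A * (s * η₁) ≤ K * (s * η₁) :=
      mul_le_mul_of_nonneg_right hKA.le (mul_nonneg hs0 h1.le)
    have he : (0:ℝ) ≤ β * A ^ 2 * s ^ 2 := by positivity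
    nlinarith [h3, hq₂, hmabs, key, hc, hd, he]
  linarith [habs, hfinal, hsqle]
end

section
/- Let A, B, K > 0 and suppose |a(ξ)| ≤ A|ξ|⁴, |V(ξ)| ≤ B|ξ|⁴, |Y₁(ξ)| ≤ B|ξ|⁴ for ξ ∈ ℝ², and suppose Ã√ε ≤ δ/4 and K ≥ 4(A + B + ÃB√ε)/δ for some Ã, ε, δ > 0. If η₁, η₂ ∈ ℝ satisfy η₁ - Y₁(ξ) > K|ξ|⁴ and |η₂ - V(ξ)| ≤ (A + B)|ξ|⁴ + Ã√ε·|η₁|, and moreover |η₁| ≤ |η₁ - Y₁(ξ)| + |Y₁(ξ)|, then |η₂ - V(ξ)| < (δ/2)(η₁ - Y₁(ξ)). -/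
/-- The second cone-aperture estimate in the wedge inclusion lemma. -/
theorem stmt17 (A B K Atilde ε δ : ℝ) (hA : 0 < A) (hB : 0 < B) (hK : 0 < K)
    (hAt : 0 < Atilde) (hε : 0 < ε) (hδ : 0 < δ)
    (a V Y₁ : EuclideanSpace ℝ (Fin 2) → ℝ)
    (ha : ∀ ξ, |a ξ| ≤ A * ‖ξ‖ ^ 4) (hV : ∀ ξ, |V ξ| ≤ B * ‖ξ‖ ^ 4)
    (hY : ∀ ξ, |Y₁ ξ| ≤ B * ‖ξ‖ ^ 4)
    (h1 : Atilde * Real.sqrt ε ≤ δ / 4)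
    (h2 : K ≥ 4 * (A + B + Atilde * B * Real.sqrt ε) / δ)
    (ξ : EuclideanSpace ℝ (Fin 2)) (η₁ η₂ : ℝ)
    (h3 : η₁ - Y₁ ξ > K * ‖ξ‖ ^ 4)
    (h4 : |η₂ - V ξ| ≤ (A + B) * ‖ξ‖ ^ 4 + Atilde * Real.sqrt ε * |η₁|)
    (h5 : |η₁| ≤ |η₁ - Y₁ ξ| + |Y₁ ξ|) :
    |η₂ - V ξ| < δ / 2 * (η₁ - Y₁ ξ) := by
  set t := ‖ξ‖ ^ 4 with ht
  set s := Real.sqrt ε with hs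
  have hs0 : 0 ≤ s := Real.sqrt_nonneg ε
  have ht0 : 0 ≤ t := by positivity
  have hYξ : |Y₁ ξ| ≤ B * t := hY ξ
  have hD : 0 < η₁ - Y₁ ξ := lt_of_le_of_lt (by positivity) h3
  have hDabs : |η₁ - Y₁ ξ| = η₁ - Y₁ ξ := abs_of_pos hD
  rw [hDabs] at h5
  have h2' : K * δ ≥ 4 * (A + B + Atilde * B * s) := by
    have := (div_le_iff₀ hδ).mp h2
    linarith
  have hη1 : |η₁| ≤ (η₁ - Y₁ ξ) + B * t := by linarith
  have hAts : 0 ≤ Atilde * s := by positivity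
  have key : Atilde * s * |η₁| ≤ δ / 4 * (η₁ - Y₁ ξ) + Atilde * s * B * t := by
    nlinarith [mul_le_mul_of_nonneg_left hη1 hAts, mul_le_mul_of_nonneg_right h1 hD.le]
  have key2 : (A + B) * t + Atilde * s * B * t < δ / 4 * (η₁ - Y₁ ξ) := by
    nlinarith [mul_le_mul_of_nonneg_right h2' ht0]
  linarith
end
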